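/- Let A be symmetric positive definite with eigenvalues in [λ_min, λ_max] and let ρ, c > 0 satisfy ρ ≤ c/(λ_max² − λ_min²) strictly (so c − (λ_max² − λ_min²)ρ > 0). If a positive sequence (ρ_t) satisfies ρ_{t+1} ≥ ρ_t·(c − (λ_max² − λ_min²)ρ_t)/(λ_min²ρ_t + c) with ρ_t ≤ ρ for all t ≥ t₀, then 1/ρ_t ≤ 1/ρ_{t₀} + (t − t₀)·λ_max²/(c − (λ_max² − λ_min²)ρ), hence ρ_t = Ω(1/t). -/

import Mathlib

/-! Inverting the recursion gives `1/ρ_{t+1} ≤ (λmin² ρ_t + c)/(ρ_t (c − Δ ρ_t)) = 1/ρ_t + λmax²/(c − Δ ρ_t)`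
with `Δ = λmax² − λmin²`, and `ρ_t ≤ ρbar` bounds the last term by `λmax²/(c − Δ ρbar)`. So `1/ρ_t` grows
at most linearly, which telescopes to the stated bound and gives `ρ_t ≥ C/t`. -/

lemma add_mul_div_mul_sub_mul_eq {a b c x : ℝ} (hx : x ≠ 0) (hcx : c - (b - a) * x ≠ 0) :
    (a * x + c) / (x * (c - (b - a) * x)) = 1 / x + b / (c - (b - a) * x) := by
  rw [div_add_div _ _ hx hcx, div_eq_div_iff (mul_ne_zero hx hcx) (mul_ne_zero hx hcx)]
  ring

lemma one_div_le_one_div_add_of_ge_mul_sub_div {a b c x y ρbar : ℝ} (hab : a ≤ b) (hb : 0 ≤ b)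
    (hx : 0 < x) (hxρ : x ≤ ρbar) (hden : 0 < c - (b - a) * ρbar)
    (hy : y ≥ x * (c - (b - a) * x) / (a * x + c)) :
    1 / y ≤ 1 / x + b / (c - (b - a) * ρbar) := by
  have hρ_le : c - (b - a) * ρbar ≤ c - (b - a) * x := by nlinarith
  have hcx : 0 < c - (b - a) * x := hden.trans_le hρ_le
  have hax : 0 < a * x + c := by nlinarith
  calc 1 / y ≤ 1 / (x * (c - (b - a) * x) / (a * x + c)) :=
        one_div_le_one_div_of_le (by positivity) hy
    _ = 1 / x + b / (c - (b - a) * x) := by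
        rw [one_div_div, add_mul_div_mul_sub_mul_eq hx.ne' hcx.ne']
    _ ≤ 1 / x + b / (c - (b - a) * ρbar) := by
        gcongr

lemma le_add_sub_mul_of_succ_le_add {u : ℕ → ℝ} {K : ℝ} {t₀ : ℕ}
    (h : ∀ t, t₀ ≤ t → u (t + 1) ≤ u t + K) :
    ∀ t, t₀ ≤ t → u t ≤ u t₀ + ((t : ℝ) - t₀) * K := by
  intro t ht
  induction t, ht using Nat.le_induction with
  | base => simp
  | succ n hn ih =>
    push_cast
    linarith [h n hn]

lemma exists_pos_div_le_of_one_div_le_add_sub_mul {ρ : ℕ → ℝ} {K : ℝ} {t₀ : ℕ}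
    (hpos : ∀ t, 0 < ρ t) (hK : 0 ≤ K)
    (h : ∀ t, t₀ ≤ t → 1 / ρ t ≤ 1 / ρ t₀ + ((t : ℝ) - t₀) * K) :
    ∃ C > (0 : ℝ), ∀ t, t₀ ≤ t → 0 < t → ρ t ≥ C / (t : ℝ) := by
  have hM : 0 < 1 / ρ t₀ + K := by have := hpos t₀; positivity
  refine ⟨1 / (1 / ρ t₀ + K), by positivity, fun t ht htpos => ?_⟩
  have ht1 : (1 : ℝ) ≤ t := by exact_mod_cast htpos
  have hlin : 1 / ρ t ≤ t * (1 / ρ t₀ + K) := by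
    nlinarith [h t ht, one_div_pos.mpr (hpos t₀), (t₀.cast_nonneg : (0 : ℝ) ≤ t₀)]
  rw [div_div, mul_comm]
  exact (one_div_le (hpos t) (by positivity)).mp hlin

theorem omgd_iid_noise_lower_bound_recursion_general
    (lmin lmax : ℝ) (hl : 0 < lmin) (hll : lmin ≤ lmax)
    (c ρbar : ℝ)
    (hden : 0 < c - (lmax ^ 2 - lmin ^ 2) * ρbar)
    (ρ : ℕ → ℝ) (hpos : ∀ t, 0 < ρ t) (t₀ : ℕ)
    (hrec : ∀ t, t₀ ≤ t →
      ρ (t + 1) ≥ ρ t * (c - (lmax ^ 2 - lmin ^ 2) * ρ t) / (lmin ^ 2 * ρ t + c))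
    (hbd : ∀ t, t₀ ≤ t → ρ t ≤ ρbar) :
    (∀ t, t₀ ≤ t →
      1 / ρ t ≤ 1 / ρ t₀ + ((t : ℝ) - (t₀ : ℝ)) * lmax ^ 2
        / (c - (lmax ^ 2 - lmin ^ 2) * ρbar)) ∧
    ∃ C > (0 : ℝ), ∀ t, t₀ ≤ t → 0 < t → ρ t ≥ C / (t : ℝ) := by
  have hsq : lmin ^ 2 ≤ lmax ^ 2 := pow_le_pow_left₀ hl.le hll 2
  have hlinear := le_add_sub_mul_of_succ_le_add (u := fun t => 1 / ρ t) fun t ht =>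
    one_div_le_one_div_add_of_ge_mul_sub_div hsq (sq_nonneg lmax) (hpos t) (hbd t ht) hden
      (hrec t ht)
  refine ⟨fun t ht => ?_, exists_pos_div_le_of_one_div_le_add_sub_mul hpos
    (div_nonneg (sq_nonneg lmax) hden.le) hlinear⟩
  rw [mul_div_assoc]
  exact hlinear t ht

/-- Quantitative lower-bound recursion for SGD with i.i.d. noise on a
quadratic: `A` symmetric positive definite with eigenvalues in `[λmin, λmax]`,
`c − (λmax² − λmin²)·ρbar > 0`, and a positive sequence satisfying the multiplicative
recursion `ρ_{t+1} ≥ ρ_t (c − (λmax²−λmin²)ρ_t)/(λmin² ρ_t + c)` with `ρ_t ≤ ρbar` for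
`t ≥ t₀`. Then `1/ρ_t ≤ 1/ρ_{t₀} + (t−t₀) λmax²/(c − (λmax²−λmin²)ρbar)`,
hence `ρ_t = Ω(1/t)`. -/
theorem omgd_iid_noise_lower_bound_recursion {d : ℕ}
    (A : Matrix (Fin d) (Fin d) ℝ) (hA : A.IsHermitian) (hpd : A.PosDef)
    (lmin lmax : ℝ) (hl : 0 < lmin) (hll : lmin ≤ lmax)
    (heig : ∀ i, lmin ≤ hA.eigenvalues i ∧ hA.eigenvalues i ≤ lmax)
    (c ρbar : ℝ) (hc : 0 < c) (hρbar : 0 < ρbar)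
    (hden : 0 < c - (lmax ^ 2 - lmin ^ 2) * ρbar)
    (ρ : ℕ → ℝ) (hpos : ∀ t, 0 < ρ t) (t₀ : ℕ)
    (hrec : ∀ t, t₀ ≤ t →
      ρ (t + 1) ≥ ρ t * (c - (lmax ^ 2 - lmin ^ 2) * ρ t) / (lmin ^ 2 * ρ t + c))
    (hbd : ∀ t, t₀ ≤ t → ρ t ≤ ρbar) :
    (∀ t, t₀ ≤ t →
      1 / ρ t ≤ 1 / ρ t₀ + ((t : ℝ) - (t₀ : ℝ)) * lmax ^ 2
        / (c - (lmax ^ 2 - lmin ^ 2) * ρbar)) ∧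
    ∃ C > (0 : ℝ), ∀ t, t₀ ≤ t → 0 < t → ρ t ≥ C / (t : ℝ) :=
  omgd_iid_noise_lower_bound_recursion_general lmin lmax hl hll c ρbar hden ρ hpos t₀ hrec hbd
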